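/- arXiv:0810.0485 — 10 statements merged into one kernel-verified Lean document; each statement's English description precedes it below -/
import Mathlib

section
/- Let m be odd and r a positive integer. For all v ∈ (Z/mZ)^r, 2‖v‖ + ‖v + ((m−1)/2)·e‖ + ‖v + ((m+1)/2)·e‖ = mr − #{i : vᵢ = 0}, where ‖·‖ is the Lee norm and e the all-ones vector. -/
/-- Lee weight of an element of `ZMod m`. -/
def leeWt (m : ℕ) (x : ZMod m) : ℕ := min x.val (m - x.val)

/-- Lee norm of a vector over `ZMod m`. -/
def leeNorm {m r : ℕ} (v : Fin r → ZMod m) : ℕ := ∑ i, leeWt m (v i)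

/-- A vector is admissible if no translate by a multiple of the all-ones vector
has smaller Lee norm. -/
def LeeAdmissible {m r : ℕ} (v : Fin r → ZMod m) : Prop :=
  ∀ x : ZMod m, leeNorm v ≤ leeNorm (fun i => v i + x)

lemma lee_key (m : ℕ) [NeZero m] (hm : Odd m) (x : ZMod m) :
    2 * leeWt m x + leeWt m (x + (((m - 1) / 2 : ℕ) : ZMod m)) +
      leeWt m (x + (((m + 1) / 2 : ℕ) : ZMod m)) = m - (if x = 0 then 1 else 0) := by
  obtain ⟨k, hk⟩ := hm
  rcases Nat.eq_zero_or_pos k with hk0 | hk0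
  · subst hk0
    have hm1 : m = 1 := by omega
    subst hm1
    simp [leeWt, Subsingleton.elim x 0]
  · have h1 : (m - 1) / 2 = k := by omega
    have h2 : (m + 1) / 2 = k + 1 := by omega
    have ha := x.val_lt
    have hv1 : (((m - 1) / 2 : ℕ) : ZMod m).val = k := by
      rw [h1, ZMod.val_natCast, Nat.mod_eq_of_lt]; omega
    have hv2 : (((m + 1) / 2 : ℕ) : ZMod m).val = k + 1 := by
      rw [h2, ZMod.val_natCast, Nat.mod_eq_of_lt]; omega
    have e1 : (x + (((m - 1) / 2 : ℕ) : ZMod m)).val = (x.val + k) % m := by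
      rw [ZMod.val_add, hv1]
    have e2 : (x + (((m + 1) / 2 : ℕ) : ZMod m)).val = (x.val + (k + 1)) % m := by
      rw [ZMod.val_add, hv2]
    have hif : (if x = 0 then 1 else 0) = (if x.val = 0 then 1 else 0) := by
      simp [ZMod.val_eq_zero]
    have m1 : ∀ n : ℕ, n < 2 * m → n % m = n - (if n < m then 0 else m) := by
      intro n hn
      split
      · rw [Nat.mod_eq_of_lt ‹n < m›]; omega
      · rw [Nat.mod_eq_sub_mod (by omega), Nat.mod_eq_of_lt]; omega
    rw [leeWt, leeWt, leeWt, e1, e2, hif, m1 _ (by omega), m1 _ (by omega)]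
    split <;> split <;> split <;> omega

theorem stmt_6 (m r : ℕ) [NeZero m] (hm : Odd m) (hr : 0 < r)
    (v : Fin r → ZMod m) :
    2 * leeNorm v + leeNorm (fun i => v i + (((m - 1) / 2 : ℕ) : ZMod m)) +
        leeNorm (fun i => v i + (((m + 1) / 2 : ℕ) : ZMod m)) =
      m * r - (Finset.univ.filter fun i => v i = 0).card := by
  have hm1 : 0 < m := Nat.pos_of_ne_zero (NeZero.ne m)
  have hsum : 2 * leeNorm v + leeNorm (fun i => v i + (((m - 1) / 2 : ℕ) : ZMod m)) +
      leeNorm (fun i => v i + (((m + 1) / 2 : ℕ) : ZMod m)) =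
      ∑ i, (m - (if v i = 0 then 1 else 0)) := by
    simp only [leeNorm, Finset.mul_sum, ← Finset.sum_add_distrib]
    exact Finset.sum_congr rfl fun i _ => lee_key m hm (v i)
  rw [hsum, Finset.card_filter]
  have h2 : (∑ i, (m - (if v i = 0 then 1 else 0))) +
      (∑ i : Fin r, (if v i = 0 then 1 else 0)) = m * r := by
    rw [← Finset.sum_add_distrib]
    have : ∀ i : Fin r, (m - (if v i = 0 then 1 else 0)) + (if v i = 0 then 1 else 0) = m := by
      intro i; split <;> omega
    simp only [this, Finset.sum_const, Finset.card_univ, Fintype.card_fin, smul_eq_mul, mul_comm]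
  omega
end

section
/- Let v ∈ (Z/mZ)^r be admissible for the Lee norm, i.e. ‖v‖ ≤ ‖v + x·e‖ for all x ∈ Z/mZ. Then for all x ∈ Z/mZ, ‖v + x·e‖ ≤ mr/2 − ‖v‖. -/
lemma mod_of_lt_two_mul (a m : ℕ) (h : a < 2 * m) :
    a % m = a ∨ (m ≤ a ∧ a % m = a - m) := by
  rcases lt_or_ge a m with h' | h'
  · exact Or.inl (Nat.mod_eq_of_lt h')
  · exact Or.inr ⟨h', by rw [Nat.mod_eq_sub_mod h', Nat.mod_eq_of_lt (by omega)]⟩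

lemma lee_key_s7 (m : ℕ) [NeZero m] (b : ZMod m) :
    2 * leeWt m b + leeWt m (b + ((m/2 : ℕ) : ZMod m))
      + leeWt m (b + (((m+1)/2 : ℕ) : ZMod m)) ≤ m := by
  have hm : 0 < m := NeZero.pos m
  have hb : b.val < m := ZMod.val_lt b
  have h1 : (b + ((m/2 : ℕ) : ZMod m)).val = (b.val + m/2 % m) % m := by
    rw [ZMod.val_add, ZMod.val_natCast]
  have h2 : (b + (((m+1)/2 : ℕ) : ZMod m)).val = (b.val + (m+1)/2 % m) % m := by
    rw [ZMod.val_add, ZMod.val_natCast]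
  have hk1 : m/2 % m = m/2 := Nat.mod_eq_of_lt (Nat.div_lt_self hm one_lt_two)
  have hk2 := mod_of_lt_two_mul ((m+1)/2) m (by omega)
  have hk2lt : (m+1)/2 % m < m := Nat.mod_lt _ hm
  have ho1 := mod_of_lt_two_mul (b.val + m/2 % m) m (by omega)
  have ho2 := mod_of_lt_two_mul (b.val + (m+1)/2 % m) m (by omega)
  unfold leeWt
  rw [h1, h2]
  omega

theorem stmt_7 (m r : ℕ) [NeZero m] (v : Fin r → ZMod m)
    (hv : LeeAdmissible v) (x : ZMod m) :
    (leeNorm (fun i => v i + x) : ℚ) ≤ m * r / 2 - leeNorm v := by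
  have key : 2 * leeNorm (fun i => v i + x)
      + leeNorm (fun i => v i + (x + ((m/2 : ℕ) : ZMod m)))
      + leeNorm (fun i => v i + (x + (((m+1)/2 : ℕ) : ZMod m))) ≤ m * r := by
    have h := Finset.sum_le_sum (s := Finset.univ)
      (fun (i : Fin r) _ => lee_key_s7 m (v i + x))
    simp only [Finset.sum_add_distrib, ← Finset.mul_sum, Finset.sum_const,
      Finset.card_univ, Fintype.card_fin, smul_eq_mul, add_assoc] at h
    unfold leeNorm
    simp only [add_assoc]
    rw [Nat.mul_comm m r]
    omega
  have h1 := hv (x + ((m/2 : ℕ) : ZMod m))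
  have h2 := hv (x + (((m+1)/2 : ℕ) : ZMod m))
  have hn : 2 * leeNorm (fun i => v i + x) + 2 * leeNorm v ≤ m * r := by omega
  have hq : ((2 * leeNorm (fun i => v i + x) + 2 * leeNorm v : ℕ) : ℚ) ≤ ((m * r : ℕ) : ℚ) := by
    exact_mod_cast hn
  push_cast at hq ⊢
  linarith
end

section
/- Let m be odd, r a positive integer, and v ∈ (Z/mZ)^r admissible for the Lee norm. Then ‖v‖ ≤ mr/4 − r/(4m). -/
lemma sum_min (t : ℕ) :
    ∑ k ∈ Finset.range (2*t+1), min k (2*t+1-k) = t*t + t := by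
  have hsplit : Finset.range (2*t+1) = Finset.Ico 0 (t+1) ∪ Finset.Ico (t+1) (2*t+1) := by
    rw [Finset.range_eq_Ico, Finset.Ico_union_Ico_eq_Ico] <;> omega
  rw [hsplit, Finset.sum_union (by
    apply Finset.Ico_disjoint_Ico_consecutive)]
  have h1 : ∑ k ∈ Finset.Ico 0 (t+1), min k (2*t+1-k) = ∑ k ∈ Finset.range (t+1), k := by
    rw [← Finset.range_eq_Ico]
    exact Finset.sum_congr rfl (fun k hk => by simp at hk; omega)
  have h2 : ∑ k ∈ Finset.Ico (t+1) (2*t+1), min k (2*t+1-k)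
      = ∑ k ∈ Finset.range t, (t - k) := by
    rw [Finset.sum_Ico_eq_sum_range]
    have : 2*t+1 - (t+1) = t := by omega
    rw [this]
    exact Finset.sum_congr rfl (fun k hk => by simp at hk; omega)
  have h3 : ∑ k ∈ Finset.range t, (t - k) = ∑ k ∈ Finset.range t, (k+1) := by
    rw [← Finset.sum_range_reflect]
    exact Finset.sum_congr rfl (fun k hk => by simp at hk; omega)
  rw [h1, h2, h3]
  have h4 : ∑ k ∈ Finset.range t, (k+1) = (∑ k ∈ Finset.range t, k) + t := by
    rw [Finset.sum_add_distrib, Finset.sum_const, Finset.card_range, smul_eq_mul, mul_one]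
  rw [h4]
  have g1 := Finset.sum_range_id_mul_two (t+1)
  have hs : t+1-1 = t := rfl
  rw [hs] at g1
  have g2 : ∑ i ∈ Finset.range (t+1), i = (∑ i ∈ Finset.range t, i) + t :=
    Finset.sum_range_succ _ _
  have hp : (t+1)*t = t*t + t := by ring
  omega

lemma sum_leeWt (m t : ℕ) [NeZero m] (hmt : m = 2*t+1) :
    ∑ x : ZMod m, leeWt m x = t*t + t := by
  subst hmt
  have : ∑ x : ZMod (2*t+1), leeWt (2*t+1) x
      = ∑ k ∈ Finset.range (2*t+1), min k (2*t+1-k) := by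
    rw [← Fin.sum_univ_eq_sum_range]
    rfl
  rw [this, sum_min]

theorem stmt_8 (m r : ℕ) [NeZero m] (hm : Odd m) (hr : 0 < r)
    (v : Fin r → ZMod m) (hv : LeeAdmissible v) :
    (leeNorm v : ℚ) ≤ m * r / 4 - r / (4 * m) := by
  obtain ⟨t, ht⟩ := hm
  have hmt : m = 2*t+1 := by omega
  -- key counting identity
  have hsum : ∑ x : ZMod m, leeNorm (fun i => v i + x) = r * (t*t + t) := by
    unfold leeNorm
    rw [Finset.sum_comm]
    have : ∀ i : Fin r, ∑ x : ZMod m, leeWt m (v i + x) = t*t + t := by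
      intro i
      rw [← sum_leeWt m t hmt]
      exact Fintype.sum_equiv (Equiv.addLeft (v i)) _ _ (fun x => rfl)
    rw [Finset.sum_congr rfl (fun i _ => this i), Finset.sum_const, Finset.card_univ,
      Fintype.card_fin, smul_eq_mul]
  have hmain : m * leeNorm v ≤ r * (t*t + t) := by
    calc m * leeNorm v = ∑ _x : ZMod m, leeNorm v := by
          rw [Finset.sum_const, Finset.card_univ, ZMod.card, smul_eq_mul]
      _ ≤ ∑ x : ZMod m, leeNorm (fun i => v i + x) := Finset.sum_le_sum (fun x _ => hv x)
      _ = r * (t*t + t) := hsum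
  have hm0 : (0:ℚ) < (m:ℚ) := by
    have := NeZero.pos m
    exact_mod_cast this
  have hQ : (m:ℚ) * (leeNorm v) ≤ r * (t*t + t) := by exact_mod_cast hmain
  have hrhs : (m:ℚ) * r / 4 - r / (4 * m) = r * (t*t+t) / m := by
    have : (m:ℚ) = 2*t+1 := by exact_mod_cast hmt
    rw [this]
    field_simp
    ring
  rw [hrhs, le_div_iff₀ hm0]
  linarith
end

section
/- Let m be even, r odd, and v ∈ (Z/mZ)^r admissible for the Lee norm. Then ‖v‖ ≤ mr/4 − 1/2. -/
lemma leeWt_succ_parity (m : ℕ) [NeZero m] (hm : Even m) (x : ZMod m) :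
    (leeWt m (x + 1) + leeWt m x) % 2 = 1 := by
  obtain ⟨k, hk⟩ := hm
  have hm0 : m ≠ 0 := NeZero.ne m
  have hm2 : 2 ≤ m := by omega
  have ha : x.val < m := x.val_lt
  have h1 : (1 : ZMod m).val = 1 := by
    rw [ZMod.val_one_eq_one_mod]; exact Nat.mod_eq_of_lt hm2
  have hx1 : (x + 1).val = (x.val + 1) % m := by
    rw [ZMod.val_add, h1]
  rcases Nat.lt_or_ge (x.val + 1) m with h | h
  · rw [Nat.mod_eq_of_lt h] at hx1
    unfold leeWt
    omega
  · rw [show x.val + 1 = m by omega, Nat.mod_self] at hx1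
    unfold leeWt
    omega

lemma leeWt_add_half (m : ℕ) [NeZero m] (hm : Even m) (x : ZMod m) :
    leeWt m x + leeWt m (x + ((m / 2 : ℕ) : ZMod m)) = m / 2 := by
  obtain ⟨k, hk⟩ := hm
  have hm0 : m ≠ 0 := NeZero.ne m
  have hk2 : m / 2 = k := by omega
  have hkm : k < m := by omega
  have ha : x.val < m := x.val_lt
  have hkv : ((k : ZMod m)).val = k := by
    rw [ZMod.val_natCast, Nat.mod_eq_of_lt hkm]
  have hx : (x + ((m / 2 : ℕ) : ZMod m)).val = (x.val + k) % m := by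
    rw [hk2, ZMod.val_add, hkv]
  rcases Nat.lt_or_ge x.val k with h | h
  · rw [Nat.mod_eq_of_lt (by omega)] at hx
    unfold leeWt
    omega
  · have : (x.val + k) % m = x.val + k - m := by
      rw [Nat.mod_eq_sub_mod (by omega), Nat.mod_eq_of_lt (by omega)]
    rw [this] at hx
    unfold leeWt
    omega

theorem stmt_9 (m r : ℕ) [NeZero m] (hm : Even m) (hr : Odd r)
    (v : Fin r → ZMod m) (hv : LeeAdmissible v) :
    (leeNorm v : ℚ) ≤ m * r / 4 - 1 / 2 := by
  have hm0 : m ≠ 0 := NeZero.ne m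
  have hd : 2 ∣ m := hm.two_dvd
  -- admissibility at 1
  have h1 : leeNorm v ≤ leeNorm (fun i => v i + 1) := hv 1
  -- parity: the two norms differ in parity
  have hpar : (leeNorm (fun i => v i + 1) + leeNorm v) % 2 = 1 := by
    have hsum : leeNorm (fun i => v i + 1) + leeNorm v
        = ∑ i, (leeWt m (v i + 1) + leeWt m (v i)) := by
      simp [leeNorm, Finset.sum_add_distrib]
    rw [hsum, Finset.sum_nat_mod]
    have hone : ∀ i ∈ Finset.univ, (leeWt m (v i + 1) + leeWt m (v i)) % 2 = 1 :=
      fun i _ => leeWt_succ_parity m hm (v i)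
    rw [Finset.sum_congr rfl hone]
    simpa using Nat.odd_iff.mp hr
  -- admissibility at 1 + m/2
  have h2 : leeNorm v ≤ leeNorm (fun i => (v i + 1) + ((m / 2 : ℕ) : ZMod m)) := by
    have := hv (1 + ((m / 2 : ℕ) : ZMod m))
    simpa [add_assoc] using this
  -- half shift sums to r * (m/2)
  have h3 : leeNorm (fun i => v i + 1)
      + leeNorm (fun i => (v i + 1) + ((m / 2 : ℕ) : ZMod m)) = r * (m / 2) := by
    have hsum : leeNorm (fun i => v i + 1)
        + leeNorm (fun i => (v i + 1) + ((m / 2 : ℕ) : ZMod m))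
        = ∑ i, (leeWt m (v i + 1) + leeWt m ((v i + 1) + ((m / 2 : ℕ) : ZMod m))) := by
      simp [leeNorm, Finset.sum_add_distrib]
    rw [hsum]
    have hhalf : ∀ i ∈ Finset.univ,
        (leeWt m (v i + 1) + leeWt m ((v i + 1) + ((m / 2 : ℕ) : ZMod m))) = m / 2 :=
      fun i _ => leeWt_add_half m hm (v i + 1)
    rw [Finset.sum_congr rfl hhalf]
    simp [mul_comm]
  -- combine: 4 * leeNorm v + 2 ≤ m * r
  have h2m : 2 * (m / 2) = m := by omega
  have step : 2 * leeNorm v + 1 ≤ r * (m / 2) := by omega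
  have key : 4 * leeNorm v + 2 ≤ m * r := by
    calc 4 * leeNorm v + 2 = 2 * (2 * leeNorm v + 1) := by ring
      _ ≤ 2 * (r * (m / 2)) := by omega
      _ = r * (2 * (m / 2)) := by ring
      _ = m * r := by rw [h2m, mul_comm]
  have hq : (4 * (leeNorm v : ℚ) + 2) ≤ (m : ℚ) * r := by
    exact_mod_cast key
  linarith
end

section
/- Let m and r both be even, and v ∈ (Z/mZ)^r admissible for the Lee norm. Then ‖v‖ ≤ mr/4. -/
lemma sum_min_range (t : ℕ) :
    ∑ k ∈ Finset.range (2 * t), min k (2 * t - k) = t * t := by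
  have hsplit : ∑ k ∈ Finset.range (2 * t), min k (2 * t - k)
      = ∑ k ∈ Finset.Ico 0 t, min k (2 * t - k)
        + ∑ k ∈ Finset.Ico t (2 * t), min k (2 * t - k) := by
    rw [Finset.range_eq_Ico, ← Finset.sum_Ico_consecutive _ (Nat.zero_le t) (by omega)]
  have h1 : ∑ k ∈ Finset.Ico 0 t, min k (2 * t - k) = ∑ k ∈ Finset.range t, k := by
    rw [← Finset.range_eq_Ico]
    apply Finset.sum_congr rfl
    intro k hk
    simp only [Finset.mem_range] at hk
    omega
  have h2 : ∑ k ∈ Finset.Ico t (2 * t), min k (2 * t - k)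
      = ∑ k ∈ Finset.range t, (t - k) := by
    rw [Finset.sum_Ico_eq_sum_range]
    apply Finset.sum_congr (by congr 1; omega)
    intro k hk
    simp only [Finset.mem_range] at hk
    omega
  have h3 : ∑ k ∈ Finset.range t, (t - k) = (∑ k ∈ Finset.range t, k) + t := by
    rw [← Finset.sum_range_reflect (fun k => t - k) t]
    have : ∑ j ∈ Finset.range t, (t - (t - 1 - j)) = ∑ j ∈ Finset.range t, (j + 1) := by
      apply Finset.sum_congr rfl
      intro j hj
      simp only [Finset.mem_range] at hj
      omega
    rw [this, Finset.sum_add_distrib, Finset.sum_const, Finset.card_range, smul_eq_mul, mul_one]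
  rw [hsplit, h1, h2, h3]
  rcases t with _ | s
  · simp
  · have hg' := Finset.sum_range_id_mul_two (s + 1)
    simp only [Nat.add_sub_cancel] at hg'
    zify at hg' ⊢
    linear_combination hg'

lemma sum_leeWt_s10 (m : ℕ) [NeZero m] :
    (∑ a : ZMod m, leeWt m a) = ∑ k ∈ Finset.range m, min k (m - k) := by
  obtain ⟨n, rfl⟩ := Nat.exists_eq_succ_of_ne_zero (NeZero.ne m)
  rw [← Fin.sum_univ_eq_sum_range (fun k => min k (n + 1 - k)) (n + 1)]
  rfl

theorem stmt_10 (m r : ℕ) [NeZero m] (hm : Even m) (hr : Even r)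
    (v : Fin r → ZMod m) (hv : LeeAdmissible v) :
    (leeNorm v : ℚ) ≤ m * r / 4 := by
  obtain ⟨t, rfl⟩ : ∃ t, m = 2 * t := by
    obtain ⟨t, ht⟩ := hm; exact ⟨t, by omega⟩
  have hcard : Fintype.card (ZMod (2 * t)) = 2 * t := ZMod.card _
  have havg : 2 * t * leeNorm v ≤ ∑ x : ZMod (2 * t), leeNorm (fun i => v i + x) := by
    calc 2 * t * leeNorm v = Finset.univ.card • leeNorm v := by
          rw [Finset.card_univ, hcard, smul_eq_mul]
      _ ≤ ∑ x : ZMod (2 * t), leeNorm (fun i => v i + x) :=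
          Finset.card_nsmul_le_sum _ _ _ (fun x _ => hv x)
  have hsum : ∑ x : ZMod (2 * t), leeNorm (fun i => v i + x) = r * (t * t) := by
    have hS : (∑ a : ZMod (2 * t), leeWt (2 * t) a) = t * t := by
      rw [sum_leeWt_s10, sum_min_range]
    unfold leeNorm
    rw [Finset.sum_comm]
    have h : ∀ i : Fin r, ∑ x : ZMod (2 * t), leeWt (2 * t) (v i + x) = t * t := by
      intro i
      rw [← hS]
      exact Fintype.sum_equiv (Equiv.addLeft (v i)) _ _ (fun x => rfl)
    rw [Finset.sum_congr rfl (fun i _ => h i), Finset.sum_const, Finset.card_univ,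
      Fintype.card_fin, smul_eq_mul]
  have key : 2 * t * leeNorm v ≤ r * (t * t) := hsum ▸ havg
  have ht0 : 0 < t := by
    have := NeZero.ne (2 * t); omega
  have hq : 2 * (t : ℚ) * leeNorm v ≤ r * (t * t) := by exact_mod_cast key
  have htq : 0 < (t : ℚ) := by exact_mod_cast ht0
  rw [le_div_iff₀ (by norm_num : (0:ℚ) < 4)]
  push_cast
  nlinarith [hq, htq]
end

section
/- Let m and r be positive integers and let v ∈ (Z/mZ)^r be admissible for the norm ‖v‖₁ = Σᵢ v̄ᵢ (sum of least nonnegative residues). Then ‖v‖₁ ≤ (mr − m − r + gcd(m,r))/2. -/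
/-- The norm given by the sum of least nonnegative residues of the components. -/
def norm1 {m r : ℕ} (v : Fin r → ZMod m) : ℕ := ∑ i, (v i).val

/-- A vector is admissible if no translate by a multiple of the all-ones vector
has smaller norm. -/
def Adm1 {m r : ℕ} (v : Fin r → ZMod m) : Prop :=
  ∀ x : ZMod m, norm1 v ≤ norm1 (fun i => v i + x)

section aux

variable (m : ℕ) [NeZero m]

lemma aux_sum_val : ∑ x : ZMod m, x.val = ∑ i ∈ Finset.range m, i := by
  apply Finset.sum_nbij' (fun x : ZMod m => x.val) (fun i : ℕ => (i : ZMod m))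
  · intro a _; exact Finset.mem_range.mpr a.val_lt
  · intro a _; exact Finset.mem_univ _
  · intro a _; simp [ZMod.natCast_val, ZMod.cast_id]
  · intro a ha; exact ZMod.val_natCast_of_lt (Finset.mem_range.mp ha)
  · intro a _; rfl

lemma aux_ker_card (r : ℕ) :
    (Finset.univ.filter (fun x : ZMod m => (r : ZMod m) * x = 0)).card = Nat.gcd m r := by
  set g := Nat.gcd m r with hg
  have hm : 0 < m := Nat.pos_of_ne_zero (NeZero.ne m)
  have hg0 : 0 < g := Nat.gcd_pos_of_pos_left r hm
  set d := m / g with hd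
  have hgm : g ∣ m := Nat.gcd_dvd_left m r
  have hdg : d * g = m := Nat.div_mul_cancel hgm
  have hd0 : 0 < d := Nat.div_pos (Nat.le_of_dvd hm hgm) hg0
  -- key equivalence
  have key : ∀ x : ZMod m, (r : ZMod m) * x = 0 ↔ d ∣ x.val := by
    intro x
    have hx : ((r * x.val : ℕ) : ZMod m) = (r : ZMod m) * x := by
      push_cast [ZMod.natCast_val, ZMod.cast_id]; ring
    rw [← hx, ZMod.natCast_eq_zero_iff]
    constructor
    · intro h
      have hgr : g ∣ r := Nat.gcd_dvd_right m r
      obtain ⟨r', hr'⟩ := hgr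
      have h2 : g * d ∣ g * (r' * x.val) := by
        rw [mul_comm d g] at hdg
        calc g * d = m := hdg
        _ ∣ r * x.val := h
        _ = g * (r' * x.val) := by rw [hr']; ring
      have h3 : d ∣ r' * x.val := (Nat.mul_dvd_mul_iff_left hg0).mp h2
      have hcop : Nat.Coprime d r' := by
        have := Nat.coprime_div_gcd_div_gcd (m := m) (n := r) (by rwa [← hg])
        have hr'' : r / g = r' := by rw [hr']; exact Nat.mul_div_cancel_left r' hg0
        rw [← hg, ← hd] at this
        rwa [hr''] at this
      exact hcop.dvd_of_dvd_mul_left h3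
    · rintro ⟨t, ht⟩
      have : m ∣ r * d := by
        have hgr : g ∣ r := Nat.gcd_dvd_right m r
        obtain ⟨r', hr'⟩ := hgr
        exact ⟨r', by rw [hr', ← hdg]; ring⟩
      calc m ∣ r * d := this
      _ ∣ r * x.val := by rw [ht]; exact ⟨t, by ring⟩
  rw [show (Finset.univ.filter (fun x : ZMod m => (r : ZMod m) * x = 0))
      = (Finset.univ.filter (fun x : ZMod m => d ∣ x.val)) from by
    apply Finset.filter_congr; intro x _; simpa using key x]
  rw [← Finset.card_range g]
  apply Finset.card_nbij' (fun x : ZMod m => x.val / d) (fun k : ℕ => ((k * d : ℕ) : ZMod m))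
  · intro a ha
    simp only [Finset.mem_coe, Finset.mem_filter, Finset.mem_univ, true_and] at ha
    refine Finset.mem_range.mpr ?_
    have := a.val_lt
    exact Nat.div_lt_of_lt_mul (by omega)
  · intro k hk
    simp only [Finset.mem_coe, Finset.mem_filter, Finset.mem_univ, true_and]
    have hlt : k * d < m := by
      have := Finset.mem_range.mp hk
      calc k * d < g * d := (Nat.mul_lt_mul_right hd0).mpr this
      _ = m := by rw [mul_comm]; exact hdg
    rw [ZMod.val_natCast_of_lt hlt]
    exact ⟨k, by ring⟩
  · intro a ha
    simp only [Finset.mem_coe, Finset.mem_filter, Finset.mem_univ, true_and] at ha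
    dsimp only
    rw [Nat.div_mul_cancel ha]
    simp [ZMod.natCast_val, ZMod.cast_id]
  · intro k hk
    have hlt : k * d < m := by
      have := Finset.mem_range.mp hk
      calc k * d < g * d := (Nat.mul_lt_mul_right hd0).mpr this
      _ = m := by rw [mul_comm]; exact hdg
    dsimp only
    rw [ZMod.val_natCast_of_lt hlt]
    exact Nat.mul_div_cancel k hd0

end aux

theorem stmt_11 (m r : ℕ) [NeZero m] (hr : 0 < r)
    (v : Fin r → ZMod m) (hv : Adm1 v) :
    (norm1 v : ℚ) ≤ (m * r - m - r + Nat.gcd m r) / 2 := by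
  have hm : 0 < m := Nat.pos_of_ne_zero (NeZero.ne m)
  set g := Nat.gcd m r with hg
  set S := norm1 v with hS
  -- Step A : pointwise lower bound
  have hA : ∀ x : ZMod m, S + ((r : ZMod m) * x).val ≤ norm1 (fun i => v i + x) := by
    intro x
    have h1 : S ≤ norm1 (fun i => v i + x) := hv x
    have hcast : ∀ (w : Fin r → ZMod m), ((norm1 w : ℕ) : ZMod m) = ∑ i, w i := by
      intro w
      simp [norm1, ZMod.natCast_val, ZMod.cast_id]
    have hcong : Nat.ModEq m (norm1 (fun i => v i + x)) (S + ((r : ZMod m) * x).val) := by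
      rw [← ZMod.natCast_eq_natCast_iff]
      push_cast
      rw [hcast, hS, hcast]
      rw [show ((((r : ZMod m) * x).val : ℕ) : ZMod m) = (r : ZMod m) * x from by
        simp [ZMod.natCast_val, ZMod.cast_id]]
      rw [Finset.sum_add_distrib, Finset.sum_const]
      simp only [Finset.card_univ, Fintype.card_fin, nsmul_eq_mul]
    obtain ⟨t, ht⟩ := Nat.le.dest h1
    have hcong2 : Nat.ModEq m t (((r : ZMod m) * x).val) := by
      have := hcong
      rw [← ht] at this
      exact (Nat.ModEq.add_left_cancel' S this)
    have : t % m = ((r : ZMod m) * x).val := by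
      rw [hcong2]
      exact Nat.mod_eq_of_lt (ZMod.val_lt _)
    have h2 : ((r : ZMod m) * x).val ≤ t := this ▸ Nat.mod_le t m
    omega
  -- Step B : total sum
  have hB : ∑ x : ZMod m, norm1 (fun i => v i + x) = r * ∑ i ∈ Finset.range m, i := by
    simp only [norm1]
    rw [Finset.sum_comm]
    have hinner : ∀ i : Fin r, ∑ x : ZMod m, (v i + x).val = ∑ i ∈ Finset.range m, i := by
      intro i
      rw [← aux_sum_val m]
      exact Equiv.sum_comp (Equiv.addLeft (v i)) (fun y : ZMod m => y.val)
    rw [Finset.sum_congr rfl (fun i _ => hinner i), Finset.sum_const]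
    simp [mul_comm]
  -- Step C : sum of (r*x).val
  have hC : 2 * ∑ x : ZMod m, ((r : ZMod m) * x).val = m * (m - g) := by
    have hneg : ∑ x : ZMod m, ((r : ZMod m) * x).val
        = ∑ x : ZMod m, ((r : ZMod m) * (-x)).val :=
      (Equiv.sum_comp (Equiv.neg (ZMod m)) (fun y : ZMod m => ((r : ZMod m) * y).val)).symm
    have hsplit : 2 * ∑ x : ZMod m, ((r : ZMod m) * x).val
        = ∑ x : ZMod m, (((r : ZMod m) * x).val + (-((r : ZMod m) * x)).val) := by
      rw [Finset.sum_add_distrib, two_mul]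
      congr 1
      rw [hneg]
      exact Finset.sum_congr rfl (fun x _ => by rw [mul_neg])
    rw [hsplit]
    have hterm : ∀ x : ZMod m, ((r : ZMod m) * x).val + (-((r : ZMod m) * x)).val
        = if (r : ZMod m) * x = 0 then 0 else m := by
      intro x
      rw [ZMod.neg_val]
      split_ifs with h
      · simp [h]
      · have := ZMod.val_lt ((r : ZMod m) * x)
        omega
    rw [Finset.sum_congr rfl (fun x _ => hterm x)]
    rw [Finset.sum_ite, Finset.sum_const, Finset.sum_const, smul_zero, zero_add, smul_eq_mul]
    have hcard := aux_ker_card m r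
    have htot : (Finset.univ.filter (fun x : ZMod m => (r : ZMod m) * x = 0)).card
        + (Finset.univ.filter (fun x : ZMod m => ¬ (r : ZMod m) * x = 0)).card
        = m := by
      rw [Finset.card_filter_add_card_filter_not, Finset.card_univ, ZMod.card]
    rw [← hg] at hcard
    have hgle : g ≤ m := Nat.le_of_dvd hm (hg ▸ Nat.gcd_dvd_left m r)
    have hc2 : (Finset.univ.filter (fun x : ZMod m => ¬ (r : ZMod m) * x = 0)).card
        = m - g := by omega
    rw [hc2, mul_comm]
  -- combine
  have hmain : m * S + ∑ x : ZMod m, ((r : ZMod m) * x).val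
      ≤ r * ∑ i ∈ Finset.range m, i := by
    rw [← hB]
    calc m * S + ∑ x : ZMod m, ((r : ZMod m) * x).val
        = ∑ x : ZMod m, (S + ((r : ZMod m) * x).val) := by
          rw [Finset.sum_add_distrib, Finset.sum_const, Finset.card_univ, ZMod.card,
            smul_eq_mul]
      _ ≤ ∑ x : ZMod m, norm1 (fun i => v i + x) :=
          Finset.sum_le_sum (fun x _ => hA x)
  have hgauss : (∑ i ∈ Finset.range m, i) * 2 = m * (m - 1) :=
    Finset.sum_range_id_mul_two m
  have hfinal : 2 * (m * S) + m * (m - g) ≤ r * (m * (m - 1)) := by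
    rw [← hgauss, ← hC]
    have h2 := Nat.mul_le_mul_left 2 hmain
    calc 2 * (m * S) + 2 * ∑ x : ZMod m, ((r : ZMod m) * x).val
        = 2 * (m * S + ∑ x : ZMod m, ((r : ZMod m) * x).val) := by ring
      _ ≤ 2 * (r * ∑ i ∈ Finset.range m, i) := h2
      _ = r * ((∑ i ∈ Finset.range m, i) * 2) := by ring
  -- cast to ℚ
  have hgle : g ≤ m := Nat.le_of_dvd hm (hg ▸ Nat.gcd_dvd_left m r)
  have hQ : 2 * ((m : ℚ) * S) + m * (m - g) ≤ r * (m * (m - 1)) := by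
    have := hfinal
    have h1 : ((m - g : ℕ) : ℚ) = (m : ℚ) - g := by
      rw [Nat.cast_sub hgle]
    have h2 : ((m - 1 : ℕ) : ℚ) = (m : ℚ) - 1 := by
      rw [Nat.cast_sub hm]
      simp
    calc 2 * ((m : ℚ) * S) + m * (m - g)
        = ((2 * (m * S) + m * (m - g) : ℕ) : ℚ) := by push_cast [h1]; ring
      _ ≤ ((r * (m * (m - 1)) : ℕ) : ℚ) := by exact_mod_cast this
      _ = r * (m * ((m : ℚ) - 1)) := by push_cast [h2]; ring
  have hmQ : (0 : ℚ) < m := by exact_mod_cast hm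
  rw [le_div_iff₀ (by norm_num : (0:ℚ) < 2)]
  have key : (m : ℚ) * ((S : ℚ) * 2) ≤ (m : ℚ) * ((m : ℚ) * r - m - r + g) := by
    nlinarith [hQ]
  have := le_of_mul_le_mul_left key hmQ
  linarith
end

section
/- Let m and r be positive integers. There exists a vector v ∈ (Z/mZ)^r, admissible for the norm ‖·‖₁ (sum of least nonnegative residues), with ‖v‖₁ = (mr − m − r + gcd(m,r))/2. -/
/-- paired residues sum to `r` or `0`. -/
lemma aux_pair_mod (m r i : ℕ) (hr : 0 < r) (hi : i ≤ r) :
    i * m % r + (r - i) * m % r = if r ∣ i * m then 0 else r := by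
  have h1 : i * m % r < r := Nat.mod_lt _ hr
  have h2 : (r - i) * m % r < r := Nat.mod_lt _ hr
  have hadd : i * m + (r - i) * m = r * m := by
    rw [← Nat.add_mul, Nat.add_sub_cancel' hi]
  have hs : (i * m % r + (r - i) * m % r) % r = 0 := by
    rw [← Nat.add_mod, hadd, Nat.mul_mod_right]
  by_cases h : r ∣ i * m
  · rw [if_pos h]
    have h1' : i * m % r = 0 := Nat.mod_eq_zero_of_dvd h
    have hdvd2 : r ∣ (r - i) * m := by
      rw [Nat.sub_mul]
      exact Nat.dvd_sub (dvd_mul_right r m) h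
    have h2' : (r - i) * m % r = 0 := Nat.mod_eq_zero_of_dvd hdvd2
    omega
  · have h1' : i * m % r ≠ 0 := fun hc => h (Nat.dvd_of_mod_eq_zero hc)
    rw [if_neg h]
    obtain ⟨k, hk⟩ := Nat.dvd_of_mod_eq_zero hs
    have hklt : k < 2 := by
      have hh : r * k < r * 2 := by omega
      exact Nat.lt_of_mul_lt_mul_left hh
    have hkpos : 0 < k := by
      rcases Nat.eq_zero_or_pos k with h0 | h0
      · subst h0; omega
      · exact h0
    have : k = 1 := by omega
    subst this
    omega

/-- number of multiples of `q` below `q*d`. -/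
lemma aux_card_dvd (q d : ℕ) (hq : 0 < q) :
    ((Finset.range (q * d)).filter (fun i => q ∣ i)).card = d := by
  have himg : (Finset.range (q * d)).filter (fun i => q ∣ i)
      = (Finset.range d).image (fun j => q * j) := by
    ext i
    simp only [Finset.mem_filter, Finset.mem_range, Finset.mem_image]
    constructor
    · rintro ⟨hlt, k, rfl⟩
      exact ⟨k, lt_of_mul_lt_mul_left hlt (Nat.zero_le q), rfl⟩
    · rintro ⟨k, hk, rfl⟩
      exact ⟨by exact Nat.mul_lt_mul_of_le_of_lt (le_refl q) hk hq, ⟨k, rfl⟩⟩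
  rw [himg, Finset.card_image_of_injective _ (mul_right_injective₀ hq.ne'), Finset.card_range]

/-- divisibility characterization. -/
lemma aux_dvd_iff (m r i : ℕ) (hm : 0 < m) (hr : 0 < r) :
    r ∣ i * m ↔ (r / Nat.gcd m r) ∣ i := by
  set d := Nat.gcd m r with hd
  have hdpos : 0 < d := Nat.gcd_pos_of_pos_left r hm
  have hrd : r / d * d = r := Nat.div_mul_cancel (Nat.gcd_dvd_right m r)
  have hmd : m / d * d = m := Nat.div_mul_cancel (Nat.gcd_dvd_left m r)
  have hcop : Nat.Coprime (r / d) (m / d) := (Nat.coprime_div_gcd_div_gcd hdpos).symm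
  constructor
  · intro h
    have h' : (r / d) * d ∣ (i * (m / d)) * d := by
      rw [hrd]
      convert h using 1
      rw [mul_assoc, hmd]
    have := (Nat.mul_dvd_mul_iff_right hdpos).mp h'
    exact hcop.dvd_of_dvd_mul_right this
  · rintro ⟨k, rfl⟩
    refine ⟨k * (m / d), ?_⟩
    calc r / d * k * m = r / d * k * (m / d * d) := by rw [hmd]
      _ = (r / d * d) * (k * (m / d)) := by ring
      _ = r * (k * (m / d)) := by rw [hrd]

/-- sum of residues: `2 * Σ (i*m % r) + r*gcd = r*r`. -/
lemma aux_sum_mod (m r : ℕ) (hm : 0 < m) (hr : 0 < r) :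
    2 * (∑ i ∈ Finset.range r, i * m % r) + r * Nat.gcd m r = r * r := by
  set d := Nat.gcd m r with hd
  have hdpos : 0 < d := Nat.gcd_pos_of_pos_left r hm
  have hrd : r / d * d = r := Nat.div_mul_cancel (Nat.gcd_dvd_right m r)
  have hqpos : 0 < r / d := Nat.div_pos (Nat.le_of_dvd hr (Nat.gcd_dvd_right m r)) hdpos
  set f : ℕ → ℕ := fun i => i * m % r with hf
  have hf0 : f 0 = 0 := by simp [hf]
  have hfr : f r = 0 := by simp [hf, Nat.mul_mod_right]
  have hrefl : ∑ i ∈ Finset.range r, f (r - i) = ∑ i ∈ Finset.range r, f i := by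
    have h1 : ∑ i ∈ Finset.range r, f (r - 1 - i + 1) = ∑ i ∈ Finset.range r, f (i + 1) :=
      Finset.sum_range_reflect (fun i => f (i + 1)) r
    have h2 : ∀ i ∈ Finset.range r, f (r - 1 - i + 1) = f (r - i) := by
      intro i hi
      simp only [Finset.mem_range] at hi
      congr 1
      omega
    rw [Finset.sum_congr rfl h2] at h1
    rw [h1]
    have h3 : ∑ i ∈ Finset.range (r + 1), f i = ∑ i ∈ Finset.range r, f i + f r :=
      Finset.sum_range_succ f r
    have h4 : ∑ i ∈ Finset.range (r + 1), f i = f 0 + ∑ i ∈ Finset.range r, f (i + 1) := by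
      rw [Finset.sum_range_succ' f r]; ring
    omega
  have key : 2 * (∑ i ∈ Finset.range r, f i)
      = ∑ i ∈ Finset.range r, (if r ∣ i * m then 0 else r) := by
    rw [two_mul]
    nth_rewrite 2 [← hrefl]
    rw [← Finset.sum_add_distrib]
    refine Finset.sum_congr rfl fun i hi => ?_
    simp only [Finset.mem_range] at hi
    exact aux_pair_mod m r i hr hi.le
  have e2 : (∑ i ∈ Finset.range r, (if r ∣ i * m then 0 else r))
      + ∑ i ∈ Finset.range r, (if r ∣ i * m then r else 0) = r * r := by
    rw [← Finset.sum_add_distrib]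
    have : ∀ i ∈ Finset.range r,
        ((if r ∣ i * m then 0 else r) + (if r ∣ i * m then r else 0)) = r := by
      intro i _; split <;> simp
    rw [Finset.sum_congr rfl this, Finset.sum_const, Finset.card_range, smul_eq_mul]
  have e3 : (∑ i ∈ Finset.range r, (if r ∣ i * m then r else 0)) = r * d := by
    have hcongr : ∀ i ∈ Finset.range r,
        (if r ∣ i * m then (r : ℕ) else 0) = (if (r / d) ∣ i then r else 0) := by
      intro i _
      simp only [aux_dvd_iff m r i hm hr, hd]
    rw [Finset.sum_congr rfl hcongr, ← Finset.sum_filter, Finset.sum_const, smul_eq_mul]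
    have hset : (Finset.range r).filter (fun i => (r / d) ∣ i)
        = (Finset.range ((r / d) * d)).filter (fun i => (r / d) ∣ i) := by rw [hrd]
    rw [hset, aux_card_dvd _ _ hqpos, mul_comm]
  have key' : 2 * ((Finset.range r).sum f)
      = ∑ i ∈ Finset.range r, (if r ∣ i * m then 0 else r) := key
  clear_value f d
  omega

/-- shifting increases the norm. -/
lemma aux_shift (m r : ℕ) (hm : 0 < m) (hr : 0 < r) (x : ℕ) (hx : x < m) :
    ∑ i ∈ Finset.range r, i * m / r ≤ ∑ i ∈ Finset.range r, (i * m / r + x) % m := by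
  set a : ℕ → ℕ := fun i => i * m / r with ha
  show (∑ i ∈ Finset.range r, a i) ≤ ∑ i ∈ Finset.range r, (a i + x) % m
  have halt : ∀ i < r, a i < m := by
    intro i hi
    have h1 : i * m < r * m := Nat.mul_lt_mul_of_lt_of_le hi (le_refl m) hm
    exact Nat.div_lt_of_lt_mul h1
  set c := ((Finset.range r).filter (fun i => m ≤ a i + x)).card with hc
  have step1 : (∑ i ∈ Finset.range r, (a i + x) % m) + m * c
      = (∑ i ∈ Finset.range r, a i) + r * x := by
    have hpt : ∀ i ∈ Finset.range r,
        (a i + x) % m + (if m ≤ a i + x then m else 0) = a i + x := by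
      intro i hi
      simp only [Finset.mem_range] at hi
      have hia : a i < m := halt i hi
      by_cases h : m ≤ a i + x
      · rw [if_pos h, Nat.mod_eq_sub_mod h, Nat.mod_eq_of_lt (by omega)]
        omega
      · rw [if_neg h, Nat.mod_eq_of_lt (by omega)]
        omega
    have hsum : ∑ i ∈ Finset.range r, ((a i + x) % m + (if m ≤ a i + x then m else 0))
        = ∑ i ∈ Finset.range r, (a i + x) := Finset.sum_congr rfl hpt
    rw [Finset.sum_add_distrib] at hsum
    rw [← Finset.sum_filter] at hsum
    rw [Finset.sum_const, smul_eq_mul, ← hc] at hsum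
    rw [Finset.sum_add_distrib, Finset.sum_const, Finset.card_range, smul_eq_mul] at hsum
    have hcm : c * m = m * c := Nat.mul_comm c m
    omega
  have step2 : m * c ≤ r * x := by
    have hsub : (Finset.range r).filter (fun i => m ≤ a i + x)
        ⊆ Finset.Ico (r - r * x / m) r := by
      intro i hi
      simp only [Finset.mem_filter, Finset.mem_range] at hi
      obtain ⟨hir, hmi⟩ := hi
      have h1 : m - x ≤ a i := by omega
      have h2 : (m - x) * r ≤ i * m := (Nat.le_div_iff_mul_le hr).mp h1
      have h3 : (r - i) * m ≤ r * x := by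
        have e1 : (m - x) * r = m * r - x * r := Nat.sub_mul m x r
        have e2 : (r - i) * m = r * m - i * m := Nat.sub_mul r i m
        have e3 : m * r = r * m := Nat.mul_comm m r
        have e4 : x * r = r * x := Nat.mul_comm x r
        have e5 : x * r ≤ m * r := Nat.mul_le_mul_right r hx.le
        have e6 : i * m ≤ r * m := Nat.mul_le_mul_right m hir.le
        omega
      have h4 : r - i ≤ r * x / m := (Nat.le_div_iff_mul_le hm).mpr h3
      simp only [Finset.mem_Ico]
      omega
    have hcard : c ≤ r * x / m := by
      calc c ≤ (Finset.Ico (r - r * x / m) r).card := Finset.card_le_card hsub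
        _ = r - (r - r * x / m) := Nat.card_Ico _ _
        _ ≤ r * x / m := by
          generalize r * x / m = k
          omega
    calc m * c ≤ m * (r * x / m) := Nat.mul_le_mul_left m hcard
      _ = (r * x / m) * m := by ring
      _ ≤ r * x := Nat.div_mul_le_self _ _
  clear_value a c
  omega

theorem stmt_12 (m r : ℕ) [NeZero m] (hr : 0 < r) :
    ∃ v : Fin r → ZMod m, Adm1 v ∧
      (norm1 v : ℚ) = (m * r - m - r + Nat.gcd m r) / 2 := by
  have hm : 0 < m := NeZero.pos m
  set a : ℕ → ℕ := fun i => i * m / r with ha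
  have halt : ∀ i < r, a i < m := by
    intro i hi
    have h1 : i * m < r * m := Nat.mul_lt_mul_of_lt_of_le hi (le_refl m) hm
    exact Nat.div_lt_of_lt_mul h1
  refine ⟨fun i => (a i.val : ZMod m), ?_, ?_⟩
  · -- admissibility
    intro x
    have hxv : x.val < m := ZMod.val_lt x
    have hval : ∀ i : Fin r, ((a i.val : ZMod m)).val = a i.val := by
      intro i
      rw [ZMod.val_natCast]
      exact Nat.mod_eq_of_lt (halt i.val i.isLt)
    have hvalx : ∀ i : Fin r, ((a i.val : ZMod m) + x).val = (a i.val + x.val) % m := by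
      intro i
      rw [ZMod.val_add, hval i]
    unfold norm1
    simp only [hval, hvalx]
    rw [Fin.sum_univ_eq_sum_range (fun i => a i), Fin.sum_univ_eq_sum_range (fun i => (a i + x.val) % m)]
    exact aux_shift m r hm hr x.val hxv
  · -- value
    have hval : ∀ i : Fin r, ((a i.val : ZMod m)).val = a i.val := by
      intro i
      rw [ZMod.val_natCast]
      exact Nat.mod_eq_of_lt (halt i.val i.isLt)
    unfold norm1
    simp only [hval]
    rw [Fin.sum_univ_eq_sum_range (fun i => a i)]
    set S := ∑ i ∈ Finset.range r, a i with hS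
    set S' := ∑ i ∈ Finset.range r, i * m % r with hS'
    set T := ∑ i ∈ Finset.range r, i with hT
    set d := Nat.gcd m r with hd
    -- basic identities over ℕ
    have eE : r * S + S' = T * m := by
      have : ∀ i ∈ Finset.range r, r * a i + i * m % r = i * m := by
        intro i _
        exact Nat.div_add_mod (i * m) r
      calc r * S + S' = ∑ i ∈ Finset.range r, (r * a i + i * m % r) := by
            rw [Finset.sum_add_distrib, ← Finset.mul_sum, ← hS, ← hS']
        _ = ∑ i ∈ Finset.range r, i * m := Finset.sum_congr rfl this
        _ = T * m := by rw [Finset.sum_mul]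
      -- done
    have eT : T * 2 + r = r * r := by
      have h := Finset.sum_range_id_mul_two r
      have h2 : r * (r - 1) + r = r * r := by
        cases r with
        | zero => omega
        | succ n => simp [Nat.mul_sub, Nat.succ_sub_one]; ring
      clear_value T
      omega
    have eB : 2 * S' + r * d = r * r := aux_sum_mod m r hm hr
    -- pass to ℚ
    have hrq : (r : ℚ) ≠ 0 := Nat.cast_ne_zero.mpr hr.ne'
    have qE : (r : ℚ) * S + S' = T * m := by exact_mod_cast congrArg (Nat.cast : ℕ → ℚ) eE
    have qT : (T : ℚ) * 2 + r = r * r := by exact_mod_cast congrArg (Nat.cast : ℕ → ℚ) eT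
    have qB : 2 * (S' : ℚ) + r * d = r * r := by exact_mod_cast congrArg (Nat.cast : ℕ → ℚ) eB
    have key : (r : ℚ) * (S * 2) = r * ((m : ℚ) * r - m - r + d) := by
      linear_combination (2 : ℚ) * qE + (m : ℚ) * qT - qB
    have key2 : (S : ℚ) * 2 = (m : ℚ) * r - m - r + d := mul_left_cancel₀ hrq key
    rw [eq_div_iff (by norm_num : (2:ℚ) ≠ 0)]
    exact_mod_cast key2
end

section
/- Let m be odd and y ∈ Z/mZ with y = 0 or (m+1)/2 ≤ ȳ ≤ m−1. Then the vector (y, y + (m−1)/2) ∈ (Z/mZ)² is admissible for the Lee norm, with norm (m−1)/2. -/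
lemma leeWt_tri (m : ℕ) [NeZero m] (a b : ZMod m) :
    leeWt m (a + b) ≤ leeWt m a + leeWt m b := by
  have hm := NeZero.pos m
  have ha := ZMod.val_lt a
  have hb := ZMod.val_lt b
  have hab : (a + b).val = (a.val + b.val) % m := ZMod.val_add a b
  unfold leeWt
  rcases Nat.lt_or_ge (a.val + b.val) m with h | h
  · rw [hab, Nat.mod_eq_of_lt h]; omega
  · have h2 : (a.val + b.val) % m = a.val + b.val - m := by
      rw [Nat.mod_eq_sub_mod h, Nat.mod_eq_of_lt (by omega)]
    rw [hab, h2]; omega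

lemma leeWt_neg (m : ℕ) [NeZero m] (a : ZMod m) : leeWt m (-a) = leeWt m a := by
  unfold leeWt
  rw [ZMod.neg_val]
  have h1 := ZMod.val_lt a
  by_cases h : a = 0
  · simp [h]
  · rw [if_neg h]
    have h2 : a.val ≠ 0 := fun h' => h ((ZMod.val_eq_zero a).mp h')
    omega

theorem stmt_15 (m : ℕ) [NeZero m] (hm : Odd m) (y : ZMod m)
    (hy : y = 0 ∨ (m + 1) / 2 ≤ y.val) :
    LeeAdmissible ![y, y + ((m - 1) / 2 : ℕ)] ∧
      leeNorm ![y, y + ((m - 1) / 2 : ℕ)] = (m - 1) / 2 := by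
  obtain ⟨t, ht⟩ := hm
  have hmpos := NeZero.pos m
  set kk : ZMod m := (((m - 1) / 2 : ℕ) : ZMod m) with hkk
  have hkval : kk.val = (m - 1) / 2 := ZMod.val_cast_of_lt (by omega)
  have hwk : leeWt m kk = (m - 1) / 2 := by unfold leeWt; omega
  have hnorm : leeNorm ![y, y + kk] = (m - 1) / 2 := by
    have hyv := ZMod.val_lt y
    have hsum : leeNorm ![y, y + kk] = leeWt m y + leeWt m (y + kk) := by
      simp [leeNorm, Fin.sum_univ_two]
    rcases hy with h | h
    · rw [hsum, h, zero_add]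
      simp [leeWt]
      omega
    · have hadd : (y + kk).val = (y.val + (m - 1) / 2) % m := by
        rw [ZMod.val_add, hkval]
      have h2 : (y.val + (m - 1) / 2) % m = y.val + (m - 1) / 2 - m := by
        rw [Nat.mod_eq_sub_mod (by omega), Nat.mod_eq_of_lt (by omega)]
      rw [hsum]
      unfold leeWt
      rw [hadd, h2]
      omega
  refine ⟨?_, hnorm⟩
  intro x
  have hsum : leeNorm (fun i => (![y, y + kk]) i + x)
      = leeWt m (y + x) + leeWt m (y + kk + x) := by
    simp [leeNorm, Fin.sum_univ_two]
  rw [hnorm, hsum, ← hwk]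
  have hdec : kk = (y + kk + x) + (-(y + x)) := by ring
  calc leeWt m kk ≤ leeWt m (y + kk + x) + leeWt m (-(y + x)) := by
        conv_lhs => rw [hdec]
        exact leeWt_tri m _ _
    _ = leeWt m (y + kk + x) + leeWt m (y + x) := by rw [leeWt_neg]
    _ = leeWt m (y + x) + leeWt m (y + kk + x) := by ring
end

section
/- Let m be odd and r odd, and let v ∈ (Z/mZ)^r have exactly s distinct components. If (N_x) is the norm sequence of v, N_x = ‖v + x·e‖ (Lee norm), then there are at most s values x ∈ Z/mZ with N_{x+1} = N_x. -/
lemma odd_step (m : ℕ) [NeZero m] (hm : Odd m) (y : ZMod m)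
    (h : 2 * y.val + 1 ≠ m) : Odd (leeWt m (y + 1) + leeWt m y) := by
  obtain ⟨k, hk⟩ := hm
  have ha : y.val < m := ZMod.val_lt y
  have hadd : (y + 1).val = (y.val + 1) % m := by
    rw [ZMod.val_add]
    rcases eq_or_lt_of_le (Nat.one_le_iff_ne_zero.mpr (NeZero.ne m)) with h1 | h1
    · omega
    · haveI : Fact (1 < m) := ⟨h1⟩
      rw [ZMod.val_one m]
  unfold leeWt
  rw [hadd, Nat.odd_iff]
  set a := y.val
  rcases Nat.lt_or_ge (a + 1) m with hlt | hge
  · rw [Nat.mod_eq_of_lt hlt]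
    omega
  · have : a + 1 = m := by omega
    rw [this, Nat.mod_self]
    omega

theorem stmt_18 (m r : ℕ) [NeZero m] (hm : Odd m) (hr : Odd r)
    (v : Fin r → ZMod m) (s : ℕ) (hs : (Finset.univ.image v).card = s) :
    (Finset.univ.filter fun x : ZMod m =>
        leeNorm (fun i => v i + (x + 1)) = leeNorm (fun i => v i + x)).card
      ≤ s := by
  set κ : ZMod m := (((m - 1) / 2 : ℕ) : ZMod m) with hκ
  have hsub : (Finset.univ.filter fun x : ZMod m =>
        leeNorm (fun i => v i + (x + 1)) = leeNorm (fun i => v i + x))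
      ⊆ (Finset.univ.image v).image (fun c => κ - c) := ?_
  · exact le_trans (Finset.card_le_card hsub)
      (le_trans Finset.card_image_le (le_of_eq hs))
  intro x hx
  rw [Finset.mem_filter] at hx
  obtain ⟨-, hx⟩ := hx
  -- find i with 2 * (v i + x).val + 1 = m
  have key : ∃ i : Fin r, 2 * (v i + x).val + 1 = m := by
    by_contra hno
    push_neg at hno
    have hodd : Odd (∑ i : Fin r, (leeWt m (v i + x + 1) + leeWt m (v i + x))) := by
      rw [Nat.odd_iff, Finset.sum_nat_mod]
      have h1 : ∀ i ∈ (Finset.univ : Finset (Fin r)),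
          (leeWt m (v i + x + 1) + leeWt m (v i + x)) % 2 = 1 := fun i _ =>
        Nat.odd_iff.mp (odd_step m hm (v i + x) (hno i))
      rw [Finset.sum_congr rfl h1]
      simpa using Nat.odd_iff.mp hr
    have hsum : (∑ i : Fin r, (leeWt m (v i + x + 1) + leeWt m (v i + x)))
        = leeNorm (fun i => v i + (x + 1)) + leeNorm (fun i => v i + x) := by
      rw [Finset.sum_add_distrib]
      congr 1
      unfold leeNorm
      exact Finset.sum_congr rfl fun i _ => by rw [add_assoc]
    rw [hsum, hx] at hodd
    exact (Nat.not_odd_iff_even.mpr (Even.add_self _)) hodd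
  obtain ⟨i, hi⟩ := key
  have hval : (v i + x).val = (m - 1) / 2 := by omega
  have heq : v i + x = κ := by
    rw [hκ, ← hval, ZMod.natCast_val, ZMod.cast_id]
  rw [Finset.mem_image]
  refine ⟨v i, Finset.mem_image_of_mem v (Finset.mem_univ i), ?_⟩
  rw [← heq]; ring
end

section
/- If v ∈ (Z/2mZ)^r has all components even and is admissible for the Lee norm modulo 2m, then the vector v/2 ∈ (Z/mZ)^r obtained by halving each component is admissible for the Lee norm modulo m, and ‖v/2‖ = ‖v‖/2. -/
lemma leeWt_double (m : ℕ) [NeZero m] (a : ℕ) :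
    leeWt (2 * m) ((2 * a : ℕ) : ZMod (2 * m)) = 2 * leeWt m ((a : ℕ) : ZMod m) := by
  have hm := NeZero.ne m
  haveI : NeZero (2 * m) := ⟨by omega⟩
  have h1 : ((2 * a : ℕ) : ZMod (2 * m)).val = (2 * a) % (2 * m) := ZMod.val_natCast _ _
  have h2 : ((a : ℕ) : ZMod m).val = a % m := ZMod.val_natCast _ _
  have h3 : (2 * a) % (2 * m) = 2 * (a % m) := Nat.mul_mod_mul_left 2 a m
  have hlt : a % m < m := Nat.mod_lt _ (Nat.pos_of_ne_zero hm)
  simp only [leeWt, h1, h2, h3]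
  omega

lemma leeNorm_double (m r : ℕ) [NeZero m] (u : Fin r → ZMod m) :
    leeNorm (fun i => ((2 * (u i).val : ℕ) : ZMod (2 * m))) = 2 * leeNorm u := by
  simp only [leeNorm, Finset.mul_sum]
  refine Finset.sum_congr rfl fun i _ => ?_
  rw [leeWt_double]
  congr 1
  simp [ZMod.natCast_val, ZMod.cast_id]

theorem stmt_19 (m r : ℕ) [NeZero m] (v : Fin r → ZMod (2 * m))
    (w : Fin r → ZMod m) (hvw : ∀ i, v i = (2 * (w i).val : ℕ))
    (hv : LeeAdmissible v) :
    LeeAdmissible w ∧ 2 * leeNorm w = leeNorm v := by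
  have hveq : v = fun i => ((2 * (w i).val : ℕ) : ZMod (2 * m)) := funext hvw
  have hnv : leeNorm v = 2 * leeNorm w := by rw [hveq, leeNorm_double]
  refine ⟨?_, hnv.symm⟩
  intro x
  have h := hv ((2 * x.val : ℕ) : ZMod (2 * m))
  have heq : (fun i => v i + ((2 * x.val : ℕ) : ZMod (2 * m)))
      = fun i => ((2 * ((w i + x).val) : ℕ) : ZMod (2 * m)) := by
    funext i
    rw [hvw i, ZMod.val_add, ← Nat.mul_mod_mul_left, Nat.cast_mul, ZMod.natCast_mod,
      ← Nat.cast_mul]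
    push_cast
    ring
  rw [heq, leeNorm_double] at h
  omega
end
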